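/- arXiv:2405.10505 — 2 statements merged into one kernel-verified Lean document; each statement's English description precedes it below -/
import Mathlib

section
/- Let P_{i1} and P_{i2} be two cells with areas A_1 > 0 and A_2 > 0 sharing an edge e_0 of length ℓ_0 > 0, with orientation signs n_1, n_2 ∈ {−1, 1} satisfying n_1 = −n_2 (so that n_j·n_{e_0} is the outward normal to cell P_{ij} at e_0). Let M ≥ 1 be an integer, Δt ∈ ℝ, and let F_k ∈ ℝ for k = 0,…,M−1 be the thickness fluxes at edge e_0 at the M fine substeps, with all fluxes at every other edge of the two cells equal to zero. Suppose the fine cell is updated by h_1^{n+1} = h_1^n − (Δt/(M·A_1)) n_1 ℓ_0 Σ_{k=0}^{M−1} F_k (M fine FB-RK(3,2) steps) and the interface cell by the interface correction h_2^{n+1} = h_2^n − (Δt/(M·A_2)) n_2 ℓ_0 Σ_{k=0}^{M−1} F_k. Then the total mass in the two cells is unchanged: A_1 h_1^{n+1} + A_2 h_2^{n+1} = A_1 h_1^n + A_2 h_2^n. -/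
/-- The two-cell case in the proof of Theorem 1: a fine cell advanced with `M`
FB-RK(3,2) substeps and an interface-one cell updated by the interface correction
share an edge `e₀`, both using the identical per-substep fluxes `F k`; since their
orientation signs at the shared edge are opposite, the total mass in the two cells
is unchanged. -/
theorem fblts_two_cell_mass_conservation
    (A₁ A₂ ℓ₀ : ℝ) (hA₁ : 0 < A₁) (hA₂ : 0 < A₂) (hℓ₀ : 0 < ℓ₀)
    (n₁ n₂ : ℝ)
    (hn₁ : n₁ = 1 ∨ n₁ = -1) (hn₂ : n₂ = 1 ∨ n₂ = -1)
    (hopp : n₁ = -n₂)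
    (M : ℕ) (hM : 1 ≤ M)
    (Δt : ℝ)
    (F : ℕ → ℝ)
    (h₁old h₂old h₁new h₂new : ℝ)
    (hfine : h₁new = h₁old - (Δt / (M * A₁)) * n₁ * ℓ₀ * ∑ k ∈ Finset.range M, F k)
    (hcorr : h₂new = h₂old - (Δt / (M * A₂)) * n₂ * ℓ₀ * ∑ k ∈ Finset.range M, F k) :
    A₁ * h₁new + A₂ * h₂new = A₁ * h₁old + A₂ * h₂old := by
  subst hfine hcorr hopp
  field_simp
  ring
end

section
/- Let E be a real normed vector space, t ∈ ℝ, Δt > 0, and let f : ℝ → E be twice differentiable on the interval [t, t + Δt] with ‖f''(s)‖ ≤ K for all s ∈ [t, t + Δt]. Let α ∈ [0, 1] and let k, M be integers with M ≥ 1 and 0 ≤ k ≤ M − 1. Then the stage prediction coefficient combination satisfies ‖(k/M)·f(t + Δt) + (1/M)·f(t + αΔt) + (1 − (k+1)/M)·f(t) − f(t + ((k+α)/M)Δt)‖ ≤ (3/2)·K·Δt²; in particular (taking α = 1/3 and α = 1/2), the FB-LTS predictions of the first-stage data at times t^{n,k+1/3} and of the second-stage data at times t^{n,k+1/2} are second-order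 accurate in Δt. -/
/-! The prediction is an affine combination whose weights sum to one and whose nodes average
to the target time, so it reproduces affine functions exactly. Subtracting the tangent line of
`f` at `t` therefore turns the prediction error into a combination of three first-order Taylor
remainders, each at most `K / 2 * Δt ^ 2` because the weights `k / M` and `1 / M` lie in `[0, 1]`. -/

open Set

section

variable {E : Type*} [NormedAddCommGroup E] [NormedSpace ℝ E]

theorem HasDerivWithinAt.mono_Ici_of_Icc {f : ℝ → E} {f' : E} {a b x : ℝ}
    (h : HasDerivWithinAt f f' (Icc a b) x) (hx : x ∈ Ico a b) :
    HasDerivWithinAt f f' (Ici x) x :=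
  h.mono_of_mem_nhdsWithin (Icc_mem_nhdsGE_of_mem hx)

theorem norm_sub_sub_smul_deriv_le_of_norm_deriv2_le {f f' f'' : ℝ → E} {a b K : ℝ}
    (hf' : ∀ s ∈ Icc a b, HasDerivWithinAt f (f' s) (Icc a b) s)
    (hf'' : ∀ s ∈ Icc a b, HasDerivWithinAt f' (f'' s) (Icc a b) s)
    (hK : ∀ s ∈ Icc a b, ‖f'' s‖ ≤ K) {x : ℝ} (hx : x ∈ Icc a b) :
    ‖f x - f a - (x - a) • f' a‖ ≤ K / 2 * (x - a) ^ 2 := by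
  have hf'_lip : ∀ s ∈ Icc a b, ‖f' s - f' a‖ ≤ K * (s - a) :=
    norm_image_sub_le_of_norm_deriv_right_le_segment
      (fun s hs => (hf'' s hs).continuousWithinAt)
      (fun s hs => (hf'' s (Ico_subset_Icc_self hs)).mono_Ici_of_Icc hs)
      (fun s hs => hK s (Ico_subset_Icc_self hs))
  have hrem : ∀ s ∈ Ico a b,
      HasDerivWithinAt (fun u => f u - f a - (u - a) • f' a) (f' s - f' a) (Ici s) s := by
    intro s hs
    have h := (((hf' s (Ico_subset_Icc_self hs)).mono_Ici_of_Icc hs).sub_const (f a)).sub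
      (((hasDerivAt_id' s).sub_const a).smul_const (f' a)).hasDerivWithinAt
    rwa [one_smul] at h
  have hB : ∀ s, HasDerivAt (fun u => K / 2 * (u - a) ^ 2) (K * (s - a)) s := fun s =>
    ((((hasDerivAt_id' s).sub_const a).pow 2).const_mul (K / 2)).congr_deriv (by ring)
  have hf_cont : ContinuousOn f (Icc a b) := fun s hs => (hf' s hs).continuousWithinAt
  exact image_norm_le_of_norm_deriv_right_le_deriv_boundary
    ((hf_cont.sub continuousOn_const).sub (by fun_prop)) hrem (by simp) hB
    (fun s hs => hf'_lip s (Ico_subset_Icc_self hs)) hx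

theorem smul_add_smul_add_smul_sub_eq_of_consistent {R M : Type*} [CommRing R] [AddCommGroup M]
    [Module R M] {a b c x y z : R} (habc : a + b + c = 1) (hz : a * x + b * y = z)
    (p q r o v : M) :
    a • p + b • q + c • o - r = a • (p - o - x • v) + b • (q - o - y • v) - (r - o - z • v) := by
  obtain rfl : c = 1 - a - b := by linear_combination habc
  subst hz
  module

theorem norm_three_point_combination_sub_le {f : ℝ → E} {v : E} {t D K a b c x y z : ℝ}
    (hK : 0 ≤ K)
    (htaylor : ∀ s ∈ Icc t (t + D), ‖f s - f t - (s - t) • v‖ ≤ K / 2 * (s - t) ^ 2)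
    (ha : a ∈ Icc (0 : ℝ) 1) (hb : b ∈ Icc (0 : ℝ) 1) (habc : a + b + c = 1)
    (hxyz : a * (x - t) + b * (y - t) = z - t)
    (hx : x ∈ Icc t (t + D)) (hy : y ∈ Icc t (t + D)) (hz : z ∈ Icc t (t + D)) :
    ‖a • f x + b • f y + c • f t - f z‖ ≤ 3 / 2 * K * D ^ 2 := by
  have hrem : ∀ s ∈ Icc t (t + D), ‖f s - f t - (s - t) • v‖ ≤ K / 2 * D ^ 2 := fun s hs =>
    (htaylor s hs).trans <| by
      gcongr
      · linarith [hs.1]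
      · linarith [hs.2]
  have hweighted : ∀ w ∈ Icc (0 : ℝ) 1, ∀ s ∈ Icc t (t + D),
      ‖w • (f s - f t - (s - t) • v)‖ ≤ K / 2 * D ^ 2 := fun w hw s hs => by
    rw [norm_smul, Real.norm_of_nonneg hw.1]
    exact (mul_le_of_le_one_left (norm_nonneg _) hw.2).trans (hrem s hs)
  rw [smul_add_smul_add_smul_sub_eq_of_consistent habc hxyz (f x) (f y) (f z) (f t) v]
  calc _ ≤ ‖a • (f x - f t - (x - t) • v)‖ + ‖b • (f y - f t - (y - t) • v)‖
          + ‖f z - f t - (z - t) • v‖ := norm_sub_le_of_le (norm_add_le _ _) le_rfl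
    _ ≤ K / 2 * D ^ 2 + K / 2 * D ^ 2 + K / 2 * D ^ 2 := by
      gcongr
      exacts [hweighted a ha x hx, hweighted b hb y hy, hrem z hz]
    _ = 3 / 2 * K * D ^ 2 := by ring

end

/-- Second-order accuracy of the FB-LTS stage interface predictions: if `f` is twice
differentiable on `[t, t + Δt]` with second derivative bounded by `K`, then for
`α ∈ [0,1]`, `0 ≤ k ≤ M − 1`, the stage prediction combination
`(k/M) f(t + Δt) + (1/M) f(t + α Δt) + (1 − (k+1)/M) f(t)` approximates
`f(t + ((k+α)/M) Δt)` with error at most `(3/2) K Δt²`. Taking `α = 1/3` and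
`α = 1/2` gives the second-order accuracy of the FB-LTS predictions of first- and
second-stage data. -/
theorem fblts_stage_prediction_second_order
    {E : Type*} [NormedAddCommGroup E] [NormedSpace ℝ E]
    (t Δt : ℝ) (hΔt : 0 < Δt)
    (f f' f'' : ℝ → E) (K : ℝ)
    (hf' : ∀ s ∈ Set.Icc t (t + Δt),
      HasDerivWithinAt f (f' s) (Set.Icc t (t + Δt)) s)
    (hf'' : ∀ s ∈ Set.Icc t (t + Δt),
      HasDerivWithinAt f' (f'' s) (Set.Icc t (t + Δt)) s)
    (hK : ∀ s ∈ Set.Icc t (t + Δt), ‖f'' s‖ ≤ K)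
    (α : ℝ) (hα : α ∈ Set.Icc (0 : ℝ) 1)
    (k M : ℕ) (hM : 1 ≤ M) (hk : k ≤ M - 1) :
    ‖((k : ℝ) / M) • f (t + Δt) + ((1 : ℝ) / M) • f (t + α * Δt)
        + (1 - ((k : ℝ) + 1) / M) • f t
        - f (t + (((k : ℝ) + α) / M) * Δt)‖ ≤ (3 / 2) * K * Δt ^ 2 := by
  have ht : t ∈ Icc t (t + Δt) := ⟨le_rfl, by linarith⟩
  have hK0 : 0 ≤ K := (norm_nonneg _).trans (hK t ht)
  have hMpos : (0 : ℝ) < M := by exact_mod_cast hM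
  have hkM : (k : ℝ) + 1 ≤ M := by exact_mod_cast (by omega : k + 1 ≤ M)
  have hpoint : ∀ θ ∈ Icc (0 : ℝ) 1, t + θ * Δt ∈ Icc t (t + Δt) := fun θ hθ =>
    ⟨by nlinarith [hθ.1], by nlinarith [hθ.2]⟩
  have hweight : ∀ x : ℝ, 0 ≤ x → x ≤ M → x / M ∈ Icc (0 : ℝ) 1 := fun x hx0 hxM =>
    ⟨div_nonneg hx0 hMpos.le, (div_le_one hMpos).2 hxM⟩
  exact norm_three_point_combination_sub_le hK0
    (fun s hs => norm_sub_sub_smul_deriv_le_of_norm_deriv2_le hf' hf'' hK hs)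
    (hweight k k.cast_nonneg (by linarith)) (hweight 1 zero_le_one (by linarith))
    (by ring) (by ring) ⟨by linarith, le_rfl⟩ (hpoint α hα)
    (hpoint _ (hweight _ (by linarith [hα.1, k.cast_nonneg (α := ℝ)]) (by linarith [hα.2])))
end
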